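/- Let Q : W → W be any ℝ-linear map with Q(W̃) ⊆ W̃ and T(Q x) = x for every x ∈ W̃, and let S : W → W be any ℝ-linear map satisfying S x − x ∈ W̃ for every x ∈ W, S x = 0 for every x ∈ W̃, and T(S x) = 0 for every x ∈ W. Then S x = x − Q(T x) for every x ∈ W. (Abstract form of Corollary 3.4 of the paper: the splitting operator equals id − Q∘(∂*_ρ∘𝒟).) -/

import Mathlib

/-!
`T` is injective on `W̃`: if `T y = 0` then `p(T) y = p(0) y` for every polynomial `p`, and the
polynomials `∏ (X - a^ℓ_r)` have nonzero constant term, so a kernel vector of `F ℓ` lies in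
`F (ℓ + 1)`; it climbs the filtration to `F N = 0`. Now `S x - x + Q (T x)` lies in `W̃` and is
killed by `T`, hence vanishes.
-/

open Polynomial

theorem Polynomial.eval_zero_prod_X_sub_C_ne_zero {R ι : Type*} [CommRing R] [IsDomain R]
    [Fintype ι] {a : ι → R} (ha : ∀ r, a r ≠ 0) : (∏ r, (X - C (a r))).eval 0 ≠ 0 := by
  simp [eval_prod, Finset.prod_ne_zero_iff, ha]

section Filtration

variable {K W : Type*} [Field K] [AddCommGroup W] [Module K W] {T : Module.End K W}

theorem mem_of_aeval_apply_mem_of_apply_eq_zero {M : Submodule K W} {p : K[X]} {y : W}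
    (hp : p.eval 0 ≠ 0) (hy : T y = 0) (h : aeval T p y ∈ M) : y ∈ M := by
  rwa [Module.End.aeval_apply_of_mem_apply_eq_smul (by rw [hy, zero_smul] : T y = (0 : K) • y),
    M.smul_mem_iff hp] at h

theorem disjoint_ker_of_aeval_mem_succ {N : ℕ} (F : ℕ → Submodule K W) (hFN : F N = ⊥)
    (p : ℕ → K[X]) (hp : ∀ ℓ < N, (p ℓ).eval 0 ≠ 0)
    (hstep : ∀ ℓ < N, ∀ x ∈ F ℓ, aeval T (p ℓ) x ∈ F (ℓ + 1)) :
    Disjoint (F 0) (LinearMap.ker T) := by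
  refine Submodule.disjoint_def.mpr fun y hy0 hyT => ?_
  have hmem : ∀ ℓ ≤ N, y ∈ F ℓ := by
    intro ℓ
    induction ℓ with
    | zero => exact fun _ => hy0
    | succ ℓ ih =>
      intro hℓ
      exact mem_of_aeval_apply_mem_of_apply_eq_zero (hp ℓ hℓ) hyT
        (hstep ℓ hℓ y (ih (ℓ.le_succ.trans hℓ)))
  simpa [hFN] using hmem N le_rfl

end Filtration

theorem apply_eq_sub_of_disjoint_ker {R W : Type*} [Ring R] [AddCommGroup W] [Module R W]
    {Wtil : Submodule R W} {T Q S : Module.End R W} (hinj : Disjoint Wtil (LinearMap.ker T))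
    (hrange : LinearMap.range T ≤ Wtil) (hQ1 : ∀ x ∈ Wtil, Q x ∈ Wtil)
    (hQ2 : ∀ x ∈ Wtil, T (Q x) = x) (hS1 : ∀ x, S x - x ∈ Wtil) (hS3 : ∀ x, T (S x) = 0)
    (x : W) : S x = x - Q (T x) := by
  have hTx : T x ∈ Wtil := hrange ⟨x, rfl⟩
  have hmem : S x - x + Q (T x) ∈ Wtil := Wtil.add_mem (hS1 x) (hQ1 _ hTx)
  have hker : T (S x - x + Q (T x)) = 0 := by
    rw [map_add, map_sub, hS3 x, hQ2 _ hTx, zero_sub, neg_add_cancel]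
  have hzero := Submodule.disjoint_def.mp hinj _ hmem hker
  rw [← sub_eq_zero, sub_sub_eq_add_sub, ← hzero]
  abel

theorem splitting_eq_id_sub_QT_general {W : Type*} [AddCommGroup W] [Module ℝ W]
    (Wtil : Submodule ℝ W)
    (T : Module.End ℝ W) (hrange : LinearMap.range T ≤ Wtil)
    (N : ℕ) (F : ℕ → Submodule ℝ W)
    (hF0 : F 0 = Wtil) (hFN : F N = ⊥)
    (j : ℕ → ℕ) (a : (ℓ : ℕ) → Fin (j ℓ) → ℝ)
    (ha0 : ∀ ℓ < N, ∀ r, a ℓ r ≠ 0)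
    (hdiag : ∀ ℓ < N, ∀ x ∈ F ℓ,
      (aeval T (∏ r : Fin (j ℓ), (X - C (a ℓ r)))) x ∈ F (ℓ + 1))
    (Q : Module.End ℝ W)
    (hQ1 : ∀ x ∈ Wtil, Q x ∈ Wtil)
    (hQ2 : ∀ x ∈ Wtil, T (Q x) = x)
    (S : Module.End ℝ W)
    (hS1 : ∀ x : W, S x - x ∈ Wtil)
    (hS3 : ∀ x : W, T (S x) = 0) :
    ∀ x : W, S x = x - Q (T x) := by
  have hinj : Disjoint Wtil (LinearMap.ker T) :=
    hF0 ▸ disjoint_ker_of_aeval_mem_succ F hFN _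
      (fun ℓ hℓ => eval_zero_prod_X_sub_C_ne_zero (ha0 ℓ hℓ)) hdiag
  exact apply_eq_sub_of_disjoint_ker hinj hrange hQ1 hQ2 hS1 hS3

/-- Abstract form of Corollary 3.4: the splitting operator equals `id − Q ∘ (∂*_ρ ∘ 𝒟)`. -/
theorem splitting_eq_id_sub_QT {W : Type*} [AddCommGroup W] [Module ℝ W]
    (Wtil Wbar : Submodule ℝ W) (hWW : Wtil ≤ Wbar)
    (T : Module.End ℝ W) (hrange : LinearMap.range T ≤ Wtil)
    (N : ℕ) (F : ℕ → Submodule ℝ W)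
    (hF0 : F 0 = Wtil) (hFN : F N = ⊥)
    (hdec : ∀ ℓ : ℕ, F (ℓ + 1) ≤ F ℓ)
    (hTF : ∀ ℓ : ℕ, ∀ x ∈ F ℓ, T x ∈ F ℓ)
    (j : ℕ → ℕ) (a : (ℓ : ℕ) → Fin (j ℓ) → ℝ)
    (ha0 : ∀ ℓ < N, ∀ r, a ℓ r ≠ 0)
    (hainj : ∀ ℓ < N, Function.Injective (a ℓ))
    (hdiag : ∀ ℓ < N, ∀ x ∈ F ℓ,
      (aeval T (∏ r : Fin (j ℓ), (X - C (a ℓ r)))) x ∈ F (ℓ + 1))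
    (Q : Module.End ℝ W)
    (hQ1 : ∀ x ∈ Wtil, Q x ∈ Wtil)
    (hQ2 : ∀ x ∈ Wtil, T (Q x) = x)
    (S : Module.End ℝ W)
    (hS1 : ∀ x : W, S x - x ∈ Wtil)
    (hS2 : ∀ x ∈ Wtil, S x = 0)
    (hS3 : ∀ x : W, T (S x) = 0) :
    ∀ x : W, S x = x - Q (T x) :=
  splitting_eq_id_sub_QT_general Wtil T hrange N F hF0 hFN j a ha0 hdiag Q hQ1 hQ2 S hS1 hS3
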